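/- Let W ∈ ℝ, Γ₀ ∈ ℝ, and let g : (0,∞)×[0,T] → ℝ be a C² function, compactly supported in w ∈ (0,∞) uniformly in t, satisfying the spatially homogeneous Fokker–Planck equation ∂_t g = ∂_w((Γ₀ ρ(t) + (w − W)) g) + ∂_{ww}(w g), where ρ(t) = ∫₀^∞ g(w,t) dw. Then ρ(t) ≡ ρ is constant, and the variance V(t) = ∫₀^∞ g(w,t)(w − W)² dw and the mean m(t) = ∫₀^∞ g(w,t) w dw satisfy d/dt V(t) = 2(1 − Γ₀ ρ) m(t) + 2 Γ₀ ρ² W − 2 V(t). -/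

import Mathlib

/-!
Integrating the equation against a test function `φ` and moving the `w`-derivative onto `φ` gives
`d/dt ∫ g φ = -∫ J φ'` for the flux `J = (Γ₀ ρ + (w - W)) g + ∂_w (w g)`; since all supports lie
in one compact subset of `(0, ∞)`, there are no boundary terms (not even at `w = 0`) and
differentiating under the integral sign is legitimate. For `φ = 1` the right side vanishes, so `ρ`
is constant. For `φ = (w - W)²` a second integration by parts turns `∫ ∂_w (w g) · 2 (w - W)`
into `-2 m`, and what is left is `-2 Γ₀ ρ (m - W ρ) - 2 V + 2 m`.
-/

open MeasureTheory Set Function Filter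

theorem setIntegral_eq_integral_of_support_subset {α E : Type*} [MeasurableSpace α]
    [NormedAddCommGroup E] [NormedSpace ℝ E] {μ : Measure α} {f : α → E} {s : Set α}
    (hf : support f ⊆ s) :
    ∫ x in s, f x ∂μ = ∫ x, f x ∂μ :=
  setIntegral_eq_integral_of_forall_compl_eq_zero fun _ hx => notMem_support.mp (hx <| hf ·)

section DerivIntegral

variable {α : Type*} [TopologicalSpace α] [T2Space α] [MeasurableSpace α]
  [OpensMeasurableSpace α] {μ : Measure α} [IsFiniteMeasureOnCompacts μ]

theorem hasDerivAt_integral_of_support_subset {F F' : α → ℝ → ℝ} {K : Set α}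
    (hK : IsCompact K) (hF_supp : ∀ t, support (F · t) ⊆ K) (hF : ∀ t, Continuous (F · t))
    (hF' : ∀ w t, HasDerivAt (F w) (F' w t) t) (hF'_cont : Continuous (uncurry F')) (t : ℝ) :
    HasDerivAt (fun s => ∫ w, F w s ∂μ) (∫ w, F' w t ∂μ) t := by
  have hF'_supp : ∀ w s, w ∉ K → F' w s = 0 := fun w s hw => by
    have hFw : F w = fun _ => 0 := funext fun s => notMem_support.mp (hw <| hF_supp s ·)
    exact (hF' w s).unique (hFw ▸ hasDerivAt_const s 0)
  obtain ⟨C, hC⟩ := (hK.prod (isCompact_closedBall t 1)).exists_bound_of_continuousOn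
    hF'_cont.continuousOn
  refine (hasDerivAt_integral_of_dominated_loc_of_deriv_le (bound := K.indicator fun _ => C)
    (Metric.closedBall_mem_nhds t one_pos) (.of_forall fun s => (hF s).aestronglyMeasurable)
    ((hF t).integrable_of_hasCompactSupport (.of_support_subset_isCompact hK (hF_supp t)))
    (hF'_cont.comp (continuous_id.prodMk continuous_const)).aestronglyMeasurable
    (ae_of_all _ fun w s hs => ?_)
    ((integrable_indicator_iff hK.isClosed.measurableSet).2
      (integrableOn_const hK.measure_lt_top.ne))
    (ae_of_all _ fun w s _ => hF' w s)).2
  by_cases hw : w ∈ K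
  · rw [indicator_of_mem hw]
    exact hC (w, s) ⟨hw, hs⟩
  · rw [indicator_of_notMem hw, hF'_supp w s hw, norm_zero]

end DerivIntegral

section PartialDeriv

variable {g : ℝ → ℝ → ℝ}

theorem differentiable_apply_of_contDiff_uncurry (hg : ContDiff ℝ 1 (uncurry g)) (w : ℝ) :
    Differentiable ℝ (g w) :=
  (hg.differentiable one_ne_zero).comp ((differentiable_const w).prodMk differentiable_id)

theorem continuous_uncurry_deriv_of_contDiff_uncurry (hg : ContDiff ℝ 1 (uncurry g)) :
    Continuous (uncurry fun w => deriv (g w)) := by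
  have h : ∀ w t, deriv (g w) t = fderiv ℝ (uncurry g) (w, t) (0, 1) := fun w t =>
    ((hg.differentiable one_ne_zero (w, t)).hasFDerivAt.comp_hasDerivAt t
      ((hasDerivAt_const t w).prodMk (hasDerivAt_id t))).deriv
  rw [show (uncurry fun w => deriv (g w)) = fun q => fderiv ℝ (uncurry g) q (0, 1) from
    funext fun q => h q.1 q.2]
  exact (hg.continuous_fderiv one_ne_zero).clm_apply continuous_const

theorem hasDerivAt_integral_mul_of_contDiff_uncurry (hg : ContDiff ℝ 1 (uncurry g))
    {K : Set ℝ} (hK : IsCompact K) (hsupp : ∀ t, support (g · t) ⊆ K) {φ : ℝ → ℝ}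
    (hφ : Continuous φ) (μ : Measure ℝ) [IsFiniteMeasureOnCompacts μ] (t : ℝ) :
    HasDerivAt (fun s => ∫ w, g w s * φ w ∂μ) (∫ w, deriv (g w) t * φ w ∂μ) t :=
  hasDerivAt_integral_of_support_subset hK
    (fun s => (support_mul_subset_left _ _).trans (hsupp s))
    (fun _ => (hg.continuous.comp (continuous_id.prodMk continuous_const)).mul hφ)
    (fun w s => ((differentiable_apply_of_contDiff_uncurry hg w s).hasDerivAt).mul_const (φ w))
    ((continuous_uncurry_deriv_of_contDiff_uncurry hg).mul (hφ.comp continuous_fst)) t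

end PartialDeriv

section IntegrationByParts

variable {f : ℝ → ℝ}

theorem integral_deriv_eq_zero_of_hasCompactSupport (hf : ContDiff ℝ 1 f)
    (hfc : HasCompactSupport f) : ∫ w, deriv f w = 0 :=
  integral_eq_zero_of_hasDerivAt_of_integrable
    (fun w => (hf.differentiable one_ne_zero w).hasDerivAt)
    ((hf.continuous_deriv le_rfl).integrable_of_hasCompactSupport hfc.deriv)
    (hf.continuous.integrable_of_hasCompactSupport hfc)

theorem integral_deriv_mul_eq_neg_integral_mul_of_hasCompactSupport {φ φ' : ℝ → ℝ}
    (hf : ContDiff ℝ 1 f) (hfc : HasCompactSupport f) (hφ : ∀ w, HasDerivAt φ (φ' w) w)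
    (hφ' : Continuous φ') : ∫ w, deriv f w * φ w = -∫ w, f w * φ' w := by
  have hφc : Continuous φ := continuous_iff_continuousAt.2 fun w => (hφ w).continuousAt
  rw [integral_mul_deriv_eq_deriv_mul_of_integrable
    (fun w _ => (hf.differentiable one_ne_zero w).hasDerivAt) (fun w _ => hφ w)
    ((hf.continuous.mul hφ').integrable_of_hasCompactSupport hfc.mul_right)
    (((hf.continuous_deriv le_rfl).mul hφc).integrable_of_hasCompactSupport hfc.deriv.mul_right)
    ((hf.continuous.mul hφc).integrable_of_hasCompactSupport hfc.mul_right), neg_neg]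

end IntegrationByParts

noncomputable def fokkerPlanckFlux (r W : ℝ) (h : ℝ → ℝ) (w : ℝ) : ℝ :=
  (r + (w - W)) * h w + deriv (fun u => u * h u) w

section FokkerPlanck

variable {h : ℝ → ℝ} (r W : ℝ)

theorem contDiff_deriv_id_mul (hh : ContDiff ℝ 2 h) : ContDiff ℝ 1 (deriv fun u => u * h u) :=
  (contDiff_succ_iff_deriv.mp (contDiff_id.mul hh : ContDiff ℝ (1 + 1) _)).2.2

theorem contDiff_drift_mul (hh : ContDiff ℝ 2 h) : ContDiff ℝ 2 fun u => (r + (u - W)) * h u :=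
  (contDiff_const.add (contDiff_id.sub contDiff_const)).mul hh

theorem contDiff_fokkerPlanckFlux (hh : ContDiff ℝ 2 h) :
    ContDiff ℝ 1 (fokkerPlanckFlux r W h) :=
  ((contDiff_drift_mul r W hh).of_le one_le_two).add (contDiff_deriv_id_mul hh)

theorem tsupport_fokkerPlanckFlux_subset : tsupport (fokkerPlanckFlux r W h) ⊆ tsupport h :=
  (tsupport_add _ _).trans <| union_subset tsupport_mul_subset_right <|
    tsupport_deriv_subset.trans tsupport_mul_subset_right

theorem deriv_fokkerPlanckFlux (hh : ContDiff ℝ 2 h) (w : ℝ) :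
    deriv (fokkerPlanckFlux r W h) w =
      deriv (fun u => (r + (u - W)) * h u) w + deriv (deriv fun u => u * h u) w :=
  deriv_add ((contDiff_drift_mul r W hh).differentiable two_ne_zero w)
    ((contDiff_deriv_id_mul hh).differentiable one_ne_zero w)

theorem setIntegral_Ioi_eq_integral_deriv_fokkerPlanckFlux_mul (hh : ContDiff ℝ 2 h)
    (hts : tsupport h ⊆ Ioi 0) {p : ℝ → ℝ} (hp : ∀ w ∈ Ioi (0 : ℝ), p w =
      deriv (fun u => (r + (u - W)) * h u) w + deriv (deriv fun u => u * h u) w) (φ : ℝ → ℝ) :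
    ∫ w in Ioi 0, p w * φ w = ∫ w, deriv (fokkerPlanckFlux r W h) w * φ w :=
  calc ∫ w in Ioi 0, p w * φ w = ∫ w in Ioi 0, deriv (fokkerPlanckFlux r W h) w * φ w :=
        setIntegral_congr_fun measurableSet_Ioi fun w hw => by
          rw [hp w hw, deriv_fokkerPlanckFlux r W hh]
    _ = ∫ w, deriv (fokkerPlanckFlux r W h) w * φ w :=
        setIntegral_eq_integral_of_support_subset <| (support_mul_subset_left _ _).trans <|
          support_deriv_subset.trans <| (tsupport_fokkerPlanckFlux_subset r W).trans hts

theorem integral_deriv_fokkerPlanckFlux (hh : ContDiff ℝ 2 h) (hhc : HasCompactSupport h) :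
    ∫ w, deriv (fokkerPlanckFlux r W h) w = 0 :=
  integral_deriv_eq_zero_of_hasCompactSupport (contDiff_fokkerPlanckFlux r W hh)
    (hhc.mono' (subset_closure.trans (tsupport_fokkerPlanckFlux_subset r W)))

theorem integral_deriv_fokkerPlanckFlux_mul_sq (hh : ContDiff ℝ 2 h)
    (hhc : HasCompactSupport h) :
    ∫ w, deriv (fokkerPlanckFlux r W h) w * (w - W) ^ 2 =
      2 * (1 - r) * (∫ w, h w * w) + 2 * r * W * (∫ w, h w) - 2 * ∫ w, h w * (w - W) ^ 2 := by
  have hsq : ∀ w, HasDerivAt (fun u => (u - W) ^ 2) (2 * (w - W)) w := fun w => by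
    simpa using ((hasDerivAt_id' w).sub_const W).fun_pow 2
  have hlin : ∀ w, HasDerivAt (fun u => 2 * (u - W)) 2 w := fun w => by
    simpa using ((hasDerivAt_id w).sub_const W).const_mul 2
  have hint : ∀ {φ : ℝ → ℝ}, Continuous φ → Integrable fun w => h w * φ w := fun hφ =>
    (hh.continuous.mul hφ).integrable_of_hasCompactSupport hhc.mul_right
  have I₀ : Integrable fun w => 2 * r * W * h w :=
    (hh.continuous.integrable_of_hasCompactSupport hhc).const_mul _
  have I₁ : Integrable fun w => 2 * r * (h w * w) := (hint continuous_id).const_mul _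
  have I₂ : Integrable fun w => 2 * (h w * (w - W) ^ 2) := (hint (by fun_prop)).const_mul _
  have hD : ∫ w, deriv (fun u => u * h u) w * (2 * (w - W)) = -(2 * ∫ w, h w * w) := by
    rw [integral_deriv_mul_eq_neg_integral_mul_of_hasCompactSupport
      (f := fun u => u * h u) ((contDiff_id.mul hh).of_le one_le_two) hhc.mul_left hlin
      continuous_const, ← integral_const_mul]
    simp only [mul_comm]
  have hDint : Integrable fun w => deriv (fun u => u * h u) w * (2 * (w - W)) :=
    ((contDiff_deriv_id_mul hh).continuous.mul (by fun_prop)).integrable_of_hasCompactSupport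
      (hhc.mul_left.deriv.mul_right)
  calc ∫ w, deriv (fokkerPlanckFlux r W h) w * (w - W) ^ 2
      = -∫ w, fokkerPlanckFlux r W h w * (2 * (w - W)) :=
        integral_deriv_mul_eq_neg_integral_mul_of_hasCompactSupport
          (contDiff_fokkerPlanckFlux r W hh)
          (hhc.mono' (subset_closure.trans (tsupport_fokkerPlanckFlux_subset r W)))
          hsq (by fun_prop)
    _ = -∫ w, (2 * r * (h w * w) - 2 * r * W * h w + 2 * (h w * (w - W) ^ 2)
          + deriv (fun u => u * h u) w * (2 * (w - W))) := by
        congr 1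
        refine integral_congr_ae (ae_of_all _ fun w => ?_)
        simp only [fokkerPlanckFlux]
        ring
    _ = -(2 * r * (∫ w, h w * w) - 2 * r * W * (∫ w, h w) + 2 * (∫ w, h w * (w - W) ^ 2)
          + ∫ w, deriv (fun u => u * h u) w * (2 * (w - W))) := by
        have I₃ : Integrable fun w => 2 * r * (h w * w) - 2 * r * W * h w := I₁.sub I₀
        have I₄ : Integrable fun w =>
            2 * r * (h w * w) - 2 * r * W * h w + 2 * (h w * (w - W) ^ 2) := I₃.add I₂
        rw [integral_add I₄ hDint, integral_add I₃ I₂, integral_sub I₁ I₀, integral_const_mul,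
          integral_const_mul, integral_const_mul]
    _ = _ := by rw [hD]; ring

end FokkerPlanck

theorem stmt15_general (T W Γ₀ : ℝ) (g : ℝ → ℝ → ℝ)
    (hg : ContDiff ℝ 2 (fun q : ℝ × ℝ => g q.1 q.2))
    (hsupp : ∃ K : Set ℝ, IsCompact K ∧ K ⊆ Set.Ioi (0 : ℝ) ∧
      ∀ w t, g w t ≠ 0 → w ∈ K)
    (hpde : ∀ w ∈ Set.Ioi (0 : ℝ), ∀ t ∈ Set.Icc (0 : ℝ) T,
      deriv (fun s => g w s) t =
        deriv (fun u =>
          (Γ₀ * (∫ v in Set.Ioi (0 : ℝ), g v t) + (u - W)) * g u t) w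
        + deriv (deriv (fun u => u * g u t)) w) :
    (∀ t ∈ Set.Icc (0 : ℝ) T,
      (∫ w in Set.Ioi (0 : ℝ), g w t) = ∫ w in Set.Ioi (0 : ℝ), g w 0) ∧
    (∀ t ∈ Set.Icc (0 : ℝ) T,
      HasDerivWithinAt
        (fun s => ∫ w in Set.Ioi (0 : ℝ), g w s * (w - W) ^ 2)
        (2 * (1 - Γ₀ * ∫ w in Set.Ioi (0 : ℝ), g w 0)
            * (∫ w in Set.Ioi (0 : ℝ), g w t * w)
          + 2 * Γ₀ * (∫ w in Set.Ioi (0 : ℝ), g w 0) ^ 2 * W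
          - 2 * ∫ w in Set.Ioi (0 : ℝ), g w t * (w - W) ^ 2)
        (Set.Icc 0 T) t) := by
  obtain ⟨K, hK, hK0, hKg⟩ := hsupp
  have hg₁ : ContDiff ℝ 1 (uncurry g) := hg.of_le one_le_two
  have hgt : ∀ t, ContDiff ℝ 2 (g · t) := fun t => hg.comp (contDiff_id.prodMk contDiff_const)
  have hgK : ∀ t, support (g · t) ⊆ K := fun t w => hKg w t
  have hgc : ∀ t, HasCompactSupport (g · t) := fun t => .of_support_subset_isCompact hK (hgK t)
  have hts : ∀ t, tsupport (g · t) ⊆ Ioi 0 :=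
    fun t => (closure_minimal (hgK t) hK.isClosed).trans hK0
  have hmoment : ∀ t ∈ Icc 0 T, ∀ {φ : ℝ → ℝ}, Continuous φ →
      HasDerivAt (fun s => ∫ w in Ioi 0, g w s * φ w)
        (∫ w, deriv (fokkerPlanckFlux (Γ₀ * ∫ v in Ioi 0, g v t) W (g · t)) w * φ w) t :=
    fun t ht φ hφ => (hasDerivAt_integral_mul_of_contDiff_uncurry hg₁ hK hgK hφ _ t).congr_deriv
      (setIntegral_Ioi_eq_integral_deriv_fokkerPlanckFlux_mul _ W (hgt t) (hts t)
        (fun w hw => hpde w hw t ht) φ)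
  have hmass : ∀ t ∈ Icc 0 T, HasDerivAt (fun s => ∫ w in Ioi 0, g w s) 0 t := fun t ht => by
    simpa [integral_deriv_fokkerPlanckFlux _ _ (hgt t) (hgc t)] using
      hmoment t ht (φ := 1) continuous_const
  have hconst := constant_of_has_deriv_right_zero
    (fun t ht => (hmass t ht).continuousAt.continuousWithinAt)
    (fun t ht => (hmass t (Ico_subset_Icc_self ht)).hasDerivWithinAt)
  refine ⟨hconst, fun t ht => ?_⟩
  have hIoi : ∀ φ : ℝ → ℝ, ∫ w, g w t * φ w = ∫ w in Ioi 0, g w t * φ w := fun φ =>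
    (setIntegral_eq_integral_of_support_subset
      ((support_mul_subset_left _ _).trans (subset_closure.trans (hts t)))).symm
  have hV := hmoment t ht (φ := fun w => (w - W) ^ 2) (by fun_prop)
  rw [integral_deriv_fokkerPlanckFlux_mul_sq _ _ (hgt t) (hgc t),
    ← setIntegral_eq_integral_of_support_subset (μ := volume) (subset_closure.trans (hts t)),
    hconst t ht] at hV
  simp only [hIoi] at hV
  exact (hV.congr_deriv (by ring)).hasDerivWithinAt

/-- Variance evolution for the spatially homogeneous Fokker–Planck equation
`∂_t g = ∂_w((Γ₀ ρ(t) + (w - W)) g) + ∂_{ww}(w g)` with `ρ(t) = ∫₀^∞ g dw`: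
for a C² solution compactly supported in `w ∈ (0,∞)` uniformly in `t`, the
mass `ρ(t)` is constant (`≡ ρ`), and the variance
`V(t) = ∫₀^∞ g (w - W)² dw` and mean `m(t) = ∫₀^∞ g w dw` satisfy
`dV/dt = 2(1 - Γ₀ ρ) m + 2 Γ₀ ρ² W - 2 V`. -/
theorem stmt15 (T W Γ₀ : ℝ) (hT : 0 < T) (g : ℝ → ℝ → ℝ)
    (hg : ContDiff ℝ 2 (fun q : ℝ × ℝ => g q.1 q.2))
    (hsupp : ∃ K : Set ℝ, IsCompact K ∧ K ⊆ Set.Ioi (0 : ℝ) ∧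
      ∀ w t, g w t ≠ 0 → w ∈ K)
    (hpde : ∀ w ∈ Set.Ioi (0 : ℝ), ∀ t ∈ Set.Icc (0 : ℝ) T,
      deriv (fun s => g w s) t =
        deriv (fun u =>
          (Γ₀ * (∫ v in Set.Ioi (0 : ℝ), g v t) + (u - W)) * g u t) w
        + deriv (deriv (fun u => u * g u t)) w) :
    (∀ t ∈ Set.Icc (0 : ℝ) T,
      (∫ w in Set.Ioi (0 : ℝ), g w t) = ∫ w in Set.Ioi (0 : ℝ), g w 0) ∧
    (∀ t ∈ Set.Icc (0 : ℝ) T,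
      HasDerivWithinAt
        (fun s => ∫ w in Set.Ioi (0 : ℝ), g w s * (w - W) ^ 2)
        (2 * (1 - Γ₀ * ∫ w in Set.Ioi (0 : ℝ), g w 0)
            * (∫ w in Set.Ioi (0 : ℝ), g w t * w)
          + 2 * Γ₀ * (∫ w in Set.Ioi (0 : ℝ), g w 0) ^ 2 * W
          - 2 * ∫ w in Set.Ioi (0 : ℝ), g w t * (w - W) ^ 2)
        (Set.Icc 0 T) t) :=
  stmt15_general T W Γ₀ g hg hsupp hpde
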